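/- Let α, k be positive integers, p prime, and F ⊆ 2^[n] a kφ(p^α)-wise p^α-divisible family, where φ is Euler's totient function. Let V be the F_p-span of the characteristic vectors of F. If v ∈ V^⟨k⟩ has all coordinates in {0,1}, then the support of v has cardinality divisible by p^α. -/

import Mathlib

open Submodule

/-- The (Schur / coordinatewise) product of two subspaces of `Fin n → K`. -/
def schurMul {K : Type*} [CommRing K] {n : ℕ} (C D : Submodule K (Fin n → K)) :
    Submodule K (Fin n → K) :=
  Submodule.span K {x | ∃ c ∈ C, ∃ d ∈ D, x = c * d}

/-- `schurPow C k` is the `(k+1)`-st Schur power `C^⟨k+1⟩`; so `schurPow C 0 = C^⟨1⟩ = C`. -/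
def schurPow {K : Type*} [CommRing K] {n : ℕ} (C : Submodule K (Fin n → K)) :
    ℕ → Submodule K (Fin n → K)
  | 0 => C
  | k + 1 => schurMul (schurPow C k) C

/-- The stabiliser `St(E) = {x : x * E ⊆ E}` of a subspace, itself a subspace. -/
def stab {K : Type*} [CommRing K] {n : ℕ} (E : Submodule K (Fin n → K)) :
    Submodule K (Fin n → K) where
  carrier := {x | ∀ e ∈ E, x * e ∈ E}
  add_mem' := fun {a b} ha hb e he => by simpa [add_mul] using E.add_mem (ha e he) (hb e he)
  zero_mem' := fun e he => by simp
  smul_mem' := fun c {x} hx e he => by simpa [smul_mul_assoc] using E.smul_mem c (hx e he)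

/-- Support of a subspace of `Fin n → K`. -/
def suppS {K : Type*} [CommRing K] {n : ℕ} (C : Submodule K (Fin n → K)) : Set (Fin n) :=
  {i | ∃ v ∈ C, v i ≠ 0}

/-- Characteristic vector of a finite set. -/
def charVec (R : Type*) [Zero R] [One R] {n : ℕ} (A : Finset (Fin n)) : Fin n → R :=
  fun i => if i ∈ A then 1 else 0

/-- `𝓕` is `k`-wise `ℓ`-divisible: every intersection of `k` (not necessarily distinct)
members of `𝓕` has cardinality divisible by `ℓ`. -/
def kWiseDiv (n k ℓ : ℕ) (𝓕 : Finset (Finset (Fin n))) : Prop :=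
  ∀ A : Fin k → Finset (Fin n), (∀ i, A i ∈ 𝓕) → ℓ ∣ (Finset.univ.inf A).card

/-- Support of a set family. -/
def famSupp {n : ℕ} (ℱ : Set (Finset (Fin n))) : Set (Fin n) :=
  ⋃ B ∈ ℱ, (B : Set (Fin n))

/-- `A` is an atom of the family `ℱ`: a nonempty subset of the support such that every
member of `ℱ` contains `A` or is disjoint from it, maximal with this property. -/
def IsAtomOf {n : ℕ} (ℱ : Set (Finset (Fin n))) (A : Finset (Fin n)) : Prop :=
  A.Nonempty ∧ (A : Set (Fin n)) ⊆ famSupp ℱ ∧ (∀ B ∈ ℱ, A ⊆ B ∨ Disjoint A B) ∧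
    ∀ A' : Finset (Fin n), A ⊆ A' → (A' : Set (Fin n)) ⊆ famSupp ℱ →
      (∀ B ∈ ℱ, A' ⊆ B ∨ Disjoint A' B) → A' = A

/-- The family `ℱ^r` of all `r`-fold intersections of members of `ℱ`. -/
def interFam {n : ℕ} (ℱ : Set (Finset (Fin n))) (r : ℕ) : Set (Finset (Fin n)) :=
  {S | ∃ f : Fin r → Finset (Fin n), (∀ i, f i ∈ ℱ) ∧ S = Finset.univ.inf f}

/-- The linear map sending `v` to its restriction (indicator) on a coordinate set `S`. -/
noncomputable def indicatorMapL {K : Type*} [CommRing K] {n : ℕ} (S : Set (Fin n)) :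
    (Fin n → K) →ₗ[K] (Fin n → K) where
  toFun v := S.indicator v
  map_add' a b := by
    funext i; by_cases h : i ∈ S <;> simp [Set.indicator_apply, h]
  map_smul' c a := by
    funext i; by_cases h : i ∈ S <;> simp [Set.indicator_apply, h]

/-- Restriction (projection) of a subspace `V` to the coordinates in `S`. -/
noncomputable def restrTo {K : Type*} [CommRing K] {n : ℕ} (S : Set (Fin n))
    (V : Submodule K (Fin n → K)) : Submodule K (Fin n → K) :=
  V.map (indicatorMapL S)


/-!
Lift `v` to an integer combination `w` of characteristic vectors of `k`-fold intersections of
members of `𝓕`, and put `e = φ(p^α)`. Expanding the product, `w^e` is an integer combination of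
characteristic vectors of `k e`-fold intersections, so `∑ᵢ wᵢ^e` is divisible by `p^α`. On the
other hand `wᵢ^e ≡ 1 (mod p^α)` when `p ∤ wᵢ` by Euler–Fermat, and `p^α ∣ p^e ∣ wᵢ^e` when
`p ∣ wᵢ`, since `α ≤ e`; so the same sum is congruent to the size of the support of `v`.
-/

open Finset
open scoped Nat

section interFam

variable {n : ℕ} {ℱ : Set (Finset (Fin n))}

lemma univ_mem_interFam_zero : (univ : Finset (Fin n)) ∈ interFam ℱ 0 :=
  ⟨Fin.elim0, Fin.rec0, by simp⟩

lemma mem_interFam_one {B : Finset (Fin n)} (hB : B ∈ ℱ) : B ∈ interFam ℱ 1 :=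
  ⟨fun _ => B, fun _ => hB, by simp⟩

lemma inter_mem_interFam_add {a b : ℕ} {S T : Finset (Fin n)} (hS : S ∈ interFam ℱ a)
    (hT : T ∈ interFam ℱ b) : S ∩ T ∈ interFam ℱ (a + b) := by
  obtain ⟨f, hf, rfl⟩ := hS
  obtain ⟨g, hg, rfl⟩ := hT
  refine ⟨Fin.append f g, Fin.addCases (by simpa using hf) (by simpa using hg), ?_⟩
  ext x
  simp [Finset.mem_inf, Fin.forall_fin_add]

end interFam

section charVec

variable {R : Type*} [CommRing R] {n : ℕ}

lemma schurMul_eq_mul (C D : Submodule R (Fin n → R)) : schurMul C D = C * D := by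
  rw [mul_eq_span_mul_set, schurMul]
  congr 1
  ext x
  constructor
  · rintro ⟨c, hc, d, hd, rfl⟩
    exact Set.mul_mem_mul hc hd
  · rintro ⟨c, hc, d, hd, rfl⟩
    exact ⟨c, hc, d, hd, rfl⟩

lemma charVec_univ : charVec R (univ : Finset (Fin n)) = 1 := by
  ext i
  simp [charVec]

lemma charVec_mul (A B : Finset (Fin n)) : charVec R A * charVec R B = charVec R (A ∩ B) := by
  ext i
  by_cases hA : i ∈ A <;> by_cases hB : i ∈ B <;> simp [charVec, hA, hB]

lemma sum_charVec (S : Finset (Fin n)) : ∑ i, charVec R S i = S.card := by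
  simp [charVec]

lemma span_charVec_interFam_mul_le (ℱ : Set (Finset (Fin n))) (a b : ℕ) :
    span R (charVec R '' interFam ℱ a) * span R (charVec R '' interFam ℱ b) ≤
      span R (charVec R '' interFam ℱ (a + b)) := by
  rw [span_mul_span]
  refine span_mono ?_
  rintro _ ⟨_, ⟨S, hS, rfl⟩, _, ⟨T, hT, rfl⟩, rfl⟩
  exact ⟨S ∩ T, inter_mem_interFam_add hS hT, (charVec_mul S T).symm⟩

lemma schurPow_span_charVec_le (ℱ : Set (Finset (Fin n))) :
    ∀ m, schurPow (span R (charVec R '' ℱ)) m ≤ span R (charVec R '' interFam ℱ (m + 1))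
  | 0 => span_mono (Set.image_mono fun _ => mem_interFam_one)
  | m + 1 => by
    rw [schurPow, schurMul_eq_mul]
    exact (mul_le_mul' (schurPow_span_charVec_le ℱ m) (schurPow_span_charVec_le ℱ 0)).trans
      (span_charVec_interFam_mul_le ℱ _ _)

lemma span_charVec_interFam_pow_le (ℱ : Set (Finset (Fin n))) (r : ℕ) :
    ∀ e, span R (charVec R '' interFam ℱ r) ^ e ≤ span R (charVec R '' interFam ℱ (r * e))
  | 0 => by
    rw [pow_zero, Submodule.one_le, mul_zero]
    exact subset_span ⟨univ, univ_mem_interFam_zero, charVec_univ⟩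
  | e + 1 => by
    rw [pow_succ, mul_add_one]
    exact (mul_le_mul' (span_charVec_interFam_pow_le ℱ r e) le_rfl).trans
      (span_charVec_interFam_mul_le ℱ _ _)

lemma dvd_sum_of_mem_span_charVec {ℓ : R} {𝒢 : Set (Finset (Fin n))}
    (h𝒢 : ∀ S ∈ 𝒢, ℓ ∣ (S.card : R)) {w : Fin n → R} (hw : w ∈ span R (charVec R '' 𝒢)) :
    ℓ ∣ ∑ i, w i := by
  induction hw using span_induction with
  | mem _ hx =>
    obtain ⟨S, hS, rfl⟩ := hx
    simpa [sum_charVec] using h𝒢 S hS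
  | zero => simp
  | add x y _ _ hx hy => simpa [sum_add_distrib] using dvd_add hx hy
  | smul a x _ hx => simpa [mul_sum] using hx.mul_left a

end charVec

lemma exists_intCast_eq_of_mem_span_charVec {m n : ℕ} {𝒢 : Set (Finset (Fin n))}
    {v : Fin n → ZMod m} (hv : v ∈ span (ZMod m) (charVec (ZMod m) '' 𝒢)) :
    ∃ w ∈ span ℤ (charVec ℤ '' 𝒢), (fun i => (w i : ZMod m)) = v := by
  rw [← restrictScalars_mem ℤ, restrictScalars_span ℤ (ZMod m) ZMod.intCast_surjective] at hv
  let castL := ((Int.castAddHom (ZMod m)).compLeft (Fin n)).toIntLinearMap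
  have hcast : charVec (ZMod m) '' 𝒢 = castL '' (charVec ℤ '' 𝒢) := by
    rw [Set.image_image]
    congr 1
    ext S i
    simp [castL, charVec, apply_ite (Int.cast : ℤ → ZMod m)]
  rw [hcast, ← map_span] at hv
  obtain ⟨w, hw, rfl⟩ := hv
  exact ⟨w, hw, rfl⟩

lemma le_totient_prime_pow {p : ℕ} (hp : p.Prime) (α : ℕ) : α ≤ φ (p ^ α) := by
  rcases Nat.eq_zero_or_pos α with rfl | hα
  · exact Nat.zero_le _
  have : α - 1 < p ^ (α - 1) := Nat.lt_pow_self hp.one_lt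
  calc α ≤ p ^ (α - 1) := by omega
    _ ≤ φ (p ^ α) := by
      rw [Nat.totient_prime_pow hp hα]
      exact Nat.le_mul_of_pos_right _ (Nat.sub_pos_of_lt hp.one_lt)

lemma intCast_pow_totient_prime_pow {p : ℕ} (hp : p.Prime) (α : ℕ) (w : ℤ) :
    ((w ^ φ (p ^ α) : ℤ) : ZMod (p ^ α)) = if (w : ZMod p) = 0 then 0 else 1 := by
  split_ifs with hw
  · rw [ZMod.intCast_zmod_eq_zero_iff_dvd] at hw ⊢
    push_cast
    exact (pow_dvd_pow _ (le_totient_prime_pow hp α)).trans (pow_dvd_pow_of_dvd hw _)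
  · rw [ZMod.intCast_zmod_eq_zero_iff_dvd] at hw
    have hcop : IsCoprime w ((p ^ α : ℕ) : ℤ) := by
      push_cast
      exact ((Nat.prime_iff_prime_int.1 hp).coprime_iff_not_dvd.2 hw).symm.pow_right
    have h := congrArg Units.val (ZMod.pow_totient (ZMod.unitOfIsCoprime w hcop))
    rw [Units.val_pow_eq_pow_val, ZMod.coe_unitOfIsCoprime, Units.val_one] at h
    exact_mod_cast h

theorem statement17_general (p n k α : ℕ) [Fact p.Prime] (hk : 0 < k)
    (𝓕 : Finset (Finset (Fin n)))
    (hdiv : kWiseDiv n (k * Nat.totient (p ^ α)) (p ^ α) 𝓕)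
    (V : Submodule (ZMod p) (Fin n → ZMod p))
    (hV : V = Submodule.span (ZMod p) (charVec (ZMod p) '' (𝓕 : Set (Finset (Fin n)))))
    (v : Fin n → ZMod p) (hv : v ∈ schurPow V (k - 1)) :
    p ^ α ∣ (Finset.univ.filter (fun i => v i ≠ 0)).card := by
  subst hV
  have hvk := schurPow_span_charVec_le _ (k - 1) hv
  rw [Nat.sub_add_cancel hk] at hvk
  obtain ⟨w, hw, rfl⟩ := exists_intCast_eq_of_mem_span_charVec hvk
  have hpow : w ^ φ (p ^ α) ∈ span ℤ (charVec ℤ '' interFam 𝓕 (k * φ (p ^ α))) :=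
    span_charVec_interFam_pow_le _ k _ (Submodule.pow_mem_pow _ hw _)
  have hsum : ((p ^ α : ℕ) : ℤ) ∣ ∑ i, w i ^ φ (p ^ α) := by
    refine dvd_sum_of_mem_span_charVec ?_ hpow
    rintro _ ⟨f, hf, rfl⟩
    exact_mod_cast hdiv f hf
  have hzero := (ZMod.intCast_zmod_eq_zero_iff_dvd _ _).2 hsum
  push_cast [intCast_pow_totient_prime_pow Fact.out] at hzero
  rw [← ZMod.natCast_eq_zero_iff, Finset.natCast_card_filter]
  simpa [ite_not] using hzero

/-- if `𝓕` is `k·φ(p^α)`-wise `p^α`-divisible and `v ∈ V^⟨k⟩` is a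
{0,1}-vector, then `p^α` divides the size of the support of `v`.
(Recall `schurPow V (k-1) = V^⟨k⟩`.) -/
theorem statement17 (p n k α : ℕ) [Fact p.Prime] (hα : 0 < α) (hk : 0 < k)
    (𝓕 : Finset (Finset (Fin n)))
    (hdiv : kWiseDiv n (k * Nat.totient (p ^ α)) (p ^ α) 𝓕)
    (V : Submodule (ZMod p) (Fin n → ZMod p))
    (hV : V = Submodule.span (ZMod p) (charVec (ZMod p) '' (𝓕 : Set (Finset (Fin n)))))
    (v : Fin n → ZMod p) (hv : v ∈ schurPow V (k - 1))
    (h01 : ∀ i, v i = 0 ∨ v i = 1) :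
    p ^ α ∣ (Finset.univ.filter (fun i => v i ≠ 0)).card :=
  statement17_general p n k α hk 𝓕 hdiv V hV v hv
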